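/- Let f, g : ℝ → ℂ be continuous functions that are twice differentiable at every x ≠ 0 (with first derivatives f′, g′ and second derivatives f″, g″), such that f, f′, f″, g, g′, g″ are square-integrable on ℝ, the one-sided limits f′(0+), f′(0−), g′(0+), g′(0−) exist, and f(x), f′(x), g(x), g′(x) → 0 as x → ±∞. Then ∫_ℝ (−f″(x))·conj(g(x)) dx − ∫_ℝ f(x)·conj(−g″(x)) dx = (f′(0+) − f′(0−))·conj(g(0)) − f(0)·conj(g′(0+) − g′(0−)). -/

import Mathlib

/-!
The integrand `f'' · conj g - f · conj g''` is the derivative, away from `0`, of the sesquilinear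
Wronskian `W = f' · conj g - f · conj g'`. Integrating over each half-line, `W` vanishes at `±∞`,
so `∫ (f'' · conj g - f · conj g'') = W(0-) - W(0+)`, and the one-sided limits of `W` at `0` are
read off from the continuity of `f, g` and the one-sided limits of `f', g'`.
-/

open MeasureTheory Filter Set Topology

section JumpFTC

variable {E : Type*} [NormedAddCommGroup E] [NormedSpace ℝ E] [CompleteSpace E]
  {f f' : ℝ → E} {a : ℝ} {l m : E}

theorem integral_Ioi_of_hasDerivAt_of_tendsto_nhdsGT
    (hderiv : ∀ x ∈ Ioi a, HasDerivAt f (f' x) x) (hint : IntegrableOn f' (Ioi a))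
    (ha : Tendsto f (𝓝[>] a) (𝓝 l)) (htop : Tendsto f atTop (𝓝 m)) :
    ∫ x in Ioi a, f' x = m - l := by
  have hcont : ContinuousWithinAt (Function.update f a l) (Ici a) a := by
    rwa [continuousWithinAt_update_same, Ici_sdiff_left]
  have hderiv' : ∀ x ∈ Ioi a, HasDerivAt (Function.update f a l) (f' x) x := fun x hx =>
    (hderiv x hx).congr_of_eventuallyEq <| (eventually_ne_nhds (ne_of_gt hx)).mono
      fun y hy => Function.update_of_ne hy _ _
  have htop' : Tendsto (Function.update f a l) atTop (𝓝 m) :=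
    htop.congr' <| (eventually_ne_atTop a).mono fun y hy => (Function.update_of_ne hy _ _).symm
  simpa using integral_Ioi_of_hasDerivAt_of_tendsto hcont hderiv' hint htop'

theorem integral_Iic_of_hasDerivAt_of_tendsto_nhdsLT
    (hderiv : ∀ x ∈ Iio a, HasDerivAt f (f' x) x) (hint : IntegrableOn f' (Iic a))
    (ha : Tendsto f (𝓝[<] a) (𝓝 l)) (hbot : Tendsto f atBot (𝓝 m)) :
    ∫ x in Iic a, f' x = l - m := by
  have hcont : ContinuousWithinAt (Function.update f a l) (Iic a) a := by
    rwa [continuousWithinAt_update_same, Iic_sdiff_right]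
  have hderiv' : ∀ x ∈ Iio a, HasDerivAt (Function.update f a l) (f' x) x := fun x hx =>
    (hderiv x hx).congr_of_eventuallyEq <| (eventually_ne_nhds (ne_of_lt hx)).mono
      fun y hy => Function.update_of_ne hy _ _
  have hbot' : Tendsto (Function.update f a l) atBot (𝓝 m) :=
    hbot.congr' <| (eventually_ne_atBot a).mono fun y hy => (Function.update_of_ne hy _ _).symm
  simpa using integral_Iic_of_hasDerivAt_of_tendsto hcont hderiv' hint hbot'

theorem integral_of_hasDerivAt_of_tendsto_of_jump {lₗ lᵣ mₗ mᵣ : E}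
    (hderiv : ∀ x, x ≠ a → HasDerivAt f (f' x) x) (hint : Integrable f')
    (hleft : Tendsto f (𝓝[<] a) (𝓝 lₗ)) (hright : Tendsto f (𝓝[>] a) (𝓝 lᵣ))
    (hbot : Tendsto f atBot (𝓝 mₗ)) (htop : Tendsto f atTop (𝓝 mᵣ)) :
    ∫ x, f' x = (lₗ - mₗ) + (mᵣ - lᵣ) := by
  rw [← intervalIntegral.integral_Iic_add_Ioi hint.integrableOn hint.integrableOn,
    integral_Iic_of_hasDerivAt_of_tendsto_nhdsLT (fun x hx => hderiv x (ne_of_lt hx))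
      hint.integrableOn hleft hbot,
    integral_Ioi_of_hasDerivAt_of_tendsto_nhdsGT (fun x hx => hderiv x (ne_of_gt hx))
      hint.integrableOn hright htop]

end JumpFTC

section Wronskian

variable {𝕜 : Type*} [RCLike 𝕜]

local notation "conj" => starRingEnd 𝕜

theorem MeasureTheory.MemLp.integrable_mul_conj {α : Type*} [MeasurableSpace α] {μ : Measure α}
    {f g : α → 𝕜} (hf : MemLp f 2 μ) (hg : MemLp g 2 μ) :
    Integrable (fun x => f x * conj (g x)) μ :=
  hf.integrable_mul hg.star

def conjWronskian (f f' g g' : ℝ → 𝕜) (x : ℝ) : 𝕜 :=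
  f' x * conj (g x) - f x * conj (g' x)

variable {f f' f'' g g' g'' : ℝ → 𝕜}

theorem hasDerivAt_conjWronskian {x : ℝ}
    (hf : HasDerivAt f (f' x) x) (hf' : HasDerivAt f' (f'' x) x)
    (hg : HasDerivAt g (g' x) x) (hg' : HasDerivAt g' (g'' x) x) :
    HasDerivAt (conjWronskian f f' g g') (f'' x * conj (g x) - f x * conj (g'' x)) x := by
  have hcg : HasDerivAt (fun y => conj (g y)) (conj (g' x)) x := hg.star
  have hcg' : HasDerivAt (fun y => conj (g' y)) (conj (g'' x)) x := hg'.star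
  exact ((hf'.mul hcg).sub (hf.mul hcg')).congr_deriv (by ring)

theorem tendsto_conjWronskian {l : Filter ℝ} {a a' b b' : 𝕜}
    (hf : Tendsto f l (𝓝 a)) (hf' : Tendsto f' l (𝓝 a'))
    (hg : Tendsto g l (𝓝 b)) (hg' : Tendsto g' l (𝓝 b')) :
    Tendsto (conjWronskian f f' g g') l (𝓝 (a' * conj b - a * conj b')) :=
  (hf'.mul hg.star).sub (hf.mul hg'.star)

end Wronskian

theorem stmt_18_general (f g f' g' f'' g'' : ℝ → ℂ)
    (hfc : Continuous f) (hgc : Continuous g)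
    (hf : ∀ x : ℝ, x ≠ 0 → HasDerivAt f (f' x) x)
    (hf' : ∀ x : ℝ, x ≠ 0 → HasDerivAt f' (f'' x) x)
    (hg : ∀ x : ℝ, x ≠ 0 → HasDerivAt g (g' x) x)
    (hg' : ∀ x : ℝ, x ≠ 0 → HasDerivAt g' (g'' x) x)
    (hfL2 : MemLp f 2 (volume : Measure ℝ))
    (hf''L2 : MemLp f'' 2 (volume : Measure ℝ))
    (hgL2 : MemLp g 2 (volume : Measure ℝ))
    (hg''L2 : MemLp g'' 2 (volume : Measure ℝ))
    (fp fm gp gm : ℂ)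
    (hfp : Tendsto f' (nhdsWithin 0 (Ioi 0)) (nhds fp))
    (hfm : Tendsto f' (nhdsWithin 0 (Iio 0)) (nhds fm))
    (hgp : Tendsto g' (nhdsWithin 0 (Ioi 0)) (nhds gp))
    (hgm : Tendsto g' (nhdsWithin 0 (Iio 0)) (nhds gm))
    (hftop : Tendsto f atTop (nhds 0)) (hfbot : Tendsto f atBot (nhds 0))
    (hf'top : Tendsto f' atTop (nhds 0)) (hf'bot : Tendsto f' atBot (nhds 0))
    (hgtop : Tendsto g atTop (nhds 0)) (hgbot : Tendsto g atBot (nhds 0))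
    (hg'top : Tendsto g' atTop (nhds 0)) (hg'bot : Tendsto g' atBot (nhds 0)) :
    (∫ x : ℝ, (-f'' x) * (starRingEnd ℂ) (g x)) -
      (∫ x : ℝ, f x * (starRingEnd ℂ) (-g'' x)) =
    (fp - fm) * (starRingEnd ℂ) (g 0) - f 0 * (starRingEnd ℂ) (gp - gm) := by
  have hint₁ := hf''L2.integrable_mul_conj hgL2
  have hint₂ := hfL2.integrable_mul_conj hg''L2
  have hf0 : ∀ s : Set ℝ, Tendsto f (𝓝[s] 0) (𝓝 (f 0)) := fun _ => hfc.continuousWithinAt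
  have hg0 : ∀ s : Set ℝ, Tendsto g (𝓝[s] 0) (𝓝 (g 0)) := fun _ => hgc.continuousWithinAt
  have hgreen := integral_of_hasDerivAt_of_tendsto_of_jump
    (fun x hx => hasDerivAt_conjWronskian (hf x hx) (hf' x hx) (hg x hx) (hg' x hx))
    (hint₁.sub hint₂)
    (tendsto_conjWronskian (hf0 _) hfm (hg0 _) hgm)
    (tendsto_conjWronskian (hf0 _) hfp (hg0 _) hgp)
    (tendsto_conjWronskian hfbot hf'bot hgbot hg'bot)
    (tendsto_conjWronskian hftop hf'top hgtop hg'top)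
  rw [integral_sub hint₁ hint₂] at hgreen
  simp only [neg_mul, map_neg, mul_neg, integral_neg, map_sub, map_zero, mul_zero,
    sub_zero] at hgreen ⊢
  linear_combination -hgreen

/-- Green identity for `-d²/dx²` on `ℝ \ {0}`: for continuous `f, g` with square
integrable derivatives up to order two away from `0`, one-sided limits of `f', g'`
at `0`, and decay of `f, f', g, g'` at `±∞`,
`∫ (-f'')·conj g - ∫ f·conj(-g'') = (f'(0+) - f'(0-))·conj(g 0) - f 0·conj(g'(0+) - g'(0-))`. -/
theorem stmt_18 (f g f' g' f'' g'' : ℝ → ℂ)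
    (hfc : Continuous f) (hgc : Continuous g)
    (hf : ∀ x : ℝ, x ≠ 0 → HasDerivAt f (f' x) x)
    (hf' : ∀ x : ℝ, x ≠ 0 → HasDerivAt f' (f'' x) x)
    (hg : ∀ x : ℝ, x ≠ 0 → HasDerivAt g (g' x) x)
    (hg' : ∀ x : ℝ, x ≠ 0 → HasDerivAt g' (g'' x) x)
    (hfL2 : MemLp f 2 (volume : Measure ℝ))
    (hf'L2 : MemLp f' 2 (volume : Measure ℝ))
    (hf''L2 : MemLp f'' 2 (volume : Measure ℝ))
    (hgL2 : MemLp g 2 (volume : Measure ℝ))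
    (hg'L2 : MemLp g' 2 (volume : Measure ℝ))
    (hg''L2 : MemLp g'' 2 (volume : Measure ℝ))
    (fp fm gp gm : ℂ)
    (hfp : Tendsto f' (nhdsWithin 0 (Ioi 0)) (nhds fp))
    (hfm : Tendsto f' (nhdsWithin 0 (Iio 0)) (nhds fm))
    (hgp : Tendsto g' (nhdsWithin 0 (Ioi 0)) (nhds gp))
    (hgm : Tendsto g' (nhdsWithin 0 (Iio 0)) (nhds gm))
    (hftop : Tendsto f atTop (nhds 0)) (hfbot : Tendsto f atBot (nhds 0))
    (hf'top : Tendsto f' atTop (nhds 0)) (hf'bot : Tendsto f' atBot (nhds 0))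
    (hgtop : Tendsto g atTop (nhds 0)) (hgbot : Tendsto g atBot (nhds 0))
    (hg'top : Tendsto g' atTop (nhds 0)) (hg'bot : Tendsto g' atBot (nhds 0)) :
    (∫ x : ℝ, (-f'' x) * (starRingEnd ℂ) (g x)) -
      (∫ x : ℝ, f x * (starRingEnd ℂ) (-g'' x)) =
    (fp - fm) * (starRingEnd ℂ) (g 0) - f 0 * (starRingEnd ℂ) (gp - gm) :=
  stmt_18_general f g f' g' f'' g'' hfc hgc hf hf' hg hg' hfL2 hf''L2 hgL2 hg''L2 fp fm gp gm hfp
    hfm hgp hgm hftop hfbot hf'top hf'bot hgtop hgbot hg'top hg'bot
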